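/- arXiv:1104.3500 — 3 statements merged into one kernel-verified Lean document; each statement's English description precedes it below -/
import Mathlib

section
/- If x is a binary word (finite or right-infinite) and μ(x) has a prefix zz for some nonempty word z, then z is the μ-image of some word w (in particular |z| is even) and x has the prefix ww. -/
/-- Thue–Morse morphism on finite binary words: 0 ↦ 01, 1 ↦ 10 (0 = false, 1 = true). -/
def mu (w : List Bool) : List Bool := w.flatMap (fun b => [b, !b])

/-- Thue–Morse morphism on right-infinite binary words. -/
def muI (x : ℕ → Bool) : ℕ → Bool := fun n => if n % 2 = 0 then x (n / 2) else !(x (n / 2))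

/-- Prepend a finite word to an infinite word. -/
def appendInf (u : List Bool) (x : ℕ → Bool) : ℕ → Bool :=
  fun n => if h : n < u.length then u.get ⟨n, h⟩ else x (n - u.length)

/-- `w` is a prefix of the infinite word `x`. -/
def InfPrefix (w : List Bool) (x : ℕ → Bool) : Prop :=
  ∀ i (h : i < w.length), w.get ⟨i, h⟩ = x i

/-- The finite word `w` is `p`-periodic. -/
def ListPeriodic (w : List Bool) (p : ℕ) : Prop :=
  ∀ i, i + p < w.length → w.getD i false = w.getD (i + p) false

/-- `w` occurs as a factor of the infinite word `x`. -/
def IsFactor (x : ℕ → Bool) (w : List Bool) : Prop :=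
  ∃ i, ∀ k (h : k < w.length), w.get ⟨k, h⟩ = x (i + k)

/-- `w` has exponent ≥ β : it has a period `p ≥ 1` with `|w| ≥ β·p`. -/
def HasExpGE (w : List Bool) (β : ℚ) : Prop :=
  ∃ p, 1 ≤ p ∧ ListPeriodic w p ∧ β * p ≤ (w.length : ℚ)

/-- `w` has exponent > β. -/
def HasExpGT (w : List Bool) (β : ℚ) : Prop :=
  ∃ p, 1 ≤ p ∧ ListPeriodic w p ∧ β * p < (w.length : ℚ)

/-- The infinite word `x` is β-power-free: no factor has exponent ≥ β. -/
def FreeI (x : ℕ → Bool) (β : ℚ) : Prop := ∀ w, IsFactor x w → ¬ HasExpGE w β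

/-- The infinite word `x` is β⁺-power-free: no factor has exponent > β. -/
def FreePlusI (x : ℕ → Bool) (β : ℚ) : Prop := ∀ w, IsFactor x w → ¬ HasExpGT w β

/-- The finite word `x` is β-power-free. -/
def FreeL (x : List Bool) (β : ℚ) : Prop := ∀ w, w <:+: x → ¬ HasExpGE w β

/-- The finite word `x` is β⁺-power-free. -/
def FreeLPlus (x : List Bool) (β : ℚ) : Prop := ∀ w, w <:+: x → ¬ HasExpGT w β

/-- The infinite word `x` is 7/3-power-free. -/
def Free73 (x : ℕ → Bool) : Prop := FreeI x (7/3)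

/-- The prefix of length `n` of the infinite word `x` is `p`-periodic. -/
def PrefPeriodic (x : ℕ → Bool) (p n : ℕ) : Prop := ∀ i, i + p < n → x i = x (i + p)

/-- The set {ε, 0, 00, 1, 11}. -/
def P5 : Set (List Bool) :=
  {[], [false], [false, false], [true], [true, true]}

/-- Thue–Morse word: parity of the number of ones in base 2. -/
def tmWord (n : ℕ) : Bool := (Nat.digits 2 n).sum % 2 == 1

/-- Lexicographic order (0 < 1) on infinite binary words. -/
def LexLE (u v : ℕ → Bool) : Prop :=
  u = v ∨ ∃ n, (∀ k < n, u k = v k) ∧ u n = false ∧ v n = true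

/-- The 2-kernel of an infinite word. -/
def Kernel2 (x : ℕ → Bool) : Set (ℕ → Bool) :=
  {y | ∃ i j, j < 2 ^ i ∧ y = fun n => x (2 ^ i * n + j)}

/-- An infinite word is 2-automatic iff its 2-kernel is finite. -/
def TwoAutomatic (x : ℕ → Bool) : Prop := (Kernel2 x).Finite

lemma muI_even (x : ℕ → Bool) (k : ℕ) : muI x (2*k) = x k := by
  have h1 : (2*k) % 2 = 0 := by omega
  have h2 : (2*k) / 2 = k := by omega
  simp [muI, h1, h2]

lemma muI_odd (x : ℕ → Bool) (k : ℕ) : muI x (2*k+1) = !x k := by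
  have h1 : (2*k+1) % 2 = 1 := by omega
  have h2 : (2*k+1) / 2 = k := by omega
  simp [muI, h1, h2]

lemma muI_succ_odd (x : ℕ → Bool) (p : ℕ) (hp : p % 2 = 1) :
    muI x p = !(muI x (p-1)) := by
  obtain ⟨k, rfl⟩ : ∃ k, p = 2*k+1 := ⟨p/2, by omega⟩
  have : 2*k+1-1 = 2*k := by omega
  rw [this, muI_odd, muI_even]

lemma mu_range (x : ℕ → Bool) (m : ℕ) :
    mu ((List.range m).map x) = (List.range (2*m)).map (muI x) := by
  induction m with
  | zero => simp [mu]
  | succ m ih =>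
    have h2 : 2*(m+1) = (2*m+1)+1 := by ring
    rw [List.range_succ, List.map_append, h2, List.range_succ, List.range_succ,
      List.map_append, List.map_append]
    simp only [mu, List.flatMap_append] at ih ⊢
    rw [ih]
    simp [muI_even, muI_odd]

lemma infCase (x : ℕ → Bool) (z : List Bool) (hz : z ≠ []) (h : InfPrefix (z++z) (muI x)) :
    ∃ w, z = mu w ∧ InfPrefix (w++w) x := by
  set L := z.length with hL
  have hLpos : 0 < L := List.length_pos_iff.2 hz
  have hget : ∀ i, i < (z++z).length → (z++z).getD i false = muI x i := by
    intro i hi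
    rw [List.getD_eq_getElem _ _ hi]
    exact h i hi
  have h1 : ∀ i, i < L → z.getD i false = muI x i := by
    intro i hi
    have hlt : i < (z++z).length := by simp; omega
    rw [← hget i hlt, List.getD_append _ _ _ _ hi]
  have h2 : ∀ i, i < L → z.getD i false = muI x (L+i) := by
    intro i hi
    have hlt : L + i < (z++z).length := by simp; omega
    rw [← hget (L+i) hlt, List.getD_append_right _ _ _ _ (by omega)]
    congr 1
    omega
  have hLeven : L % 2 = 0 := by
    by_contra hodd
    have hodd : L % 2 = 1 := by omega
    have alt : ∀ i, i < L → z.getD i false =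
        (if i % 2 = 0 then z.getD 0 false else !(z.getD 0 false)) := by
      intro i
      induction i using Nat.strong_induction_on with
      | _ i ih =>
        intro hi
        match i, hi with
        | 0, _ => simp
        | j+1, hi =>
          by_cases hpar : (j+1) % 2 = 1
          · have e1 : z.getD (j+1) false = muI x (j+1) := h1 _ hi
            rw [e1, muI_succ_odd x (j+1) hpar, Nat.add_sub_cancel]
            have e2 : muI x j = z.getD j false := (h1 j (by omega)).symm
            rw [e2, ih j (by omega) (by omega)]
            have hj : j % 2 = 0 := by omega
            simp [hj, hpar]
          · have hpar' : (j+1) % 2 = 0 := by omega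
            have e1 : z.getD (j+1) false = muI x (L+(j+1)) := h2 _ hi
            have hLo : (L+(j+1)) % 2 = 1 := by omega
            rw [e1, muI_succ_odd x _ hLo]
            have hsub : L+(j+1)-1 = L + j := by omega
            rw [hsub]
            have e2 : muI x (L+j) = z.getD j false := (h2 j (by omega)).symm
            rw [e2, ih j (by omega) (by omega)]
            have hj : j % 2 = 1 := by omega
            simp [hj, hpar']
    have hLm1 : L - 1 < L := by omega
    have hLm1e : (L-1) % 2 = 0 := by omega
    have e1 : z.getD (L-1) false = z.getD 0 false := by
      rw [alt (L-1) hLm1]; simp [hLm1e]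
    have e2 : z.getD 0 false = muI x L := by simpa using h2 0 hLpos
    have e3 : muI x L = !(muI x (L-1)) := muI_succ_odd x L hodd
    have e4 : muI x (L-1) = z.getD (L-1) false := (h1 _ hLm1).symm
    have : z.getD 0 false = !(z.getD 0 false) := by
      calc z.getD 0 false = muI x L := e2
        _ = !(muI x (L-1)) := e3
        _ = !(z.getD (L-1) false) := by rw [e4]
        _ = !(z.getD 0 false) := by rw [e1]
    simp at this
  -- even case
  obtain ⟨m, hm⟩ : ∃ m, L = 2*m := ⟨L/2, by omega⟩
  refine ⟨(List.range m).map x, ?_, ?_⟩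
  · rw [mu_range]
    apply List.ext_getElem
    · simp [← hL, hm]
    · intro i hiz hir
      have hi : i < L := hiz
      rw [← List.getD_eq_getElem _ false hiz, h1 i hi]
      simp
  · intro i hilt
    set w := (List.range m).map x with hw
    have hwlen : w.length = m := by simp [hw]
    have hlen : (w ++ w).length = 2*m := by simp [hwlen]; ring
    have hilt2 : i < 2*m := by rw [hlen] at hilt; exact hilt
    have hwD : ∀ j, j < m → w.getD j false = x j := by
      intro j hj
      rw [hw]
      rw [List.getD_eq_getElem _ _ (by simpa using hj)]
      simp
    have key : (w ++ w).getD i false = x i := by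
      by_cases hcase : i < m
      · rw [List.getD_append _ _ _ _ (by omega), hwD i hcase]
      · rw [List.getD_append_right _ _ _ _ (by omega), hwlen, hwD (i-m) (by omega)]
        set j := i - m with hjd
        have e1 : z.getD (2*j) false = muI x (2*j) := h1 _ (by omega)
        have e2 : z.getD (2*j) false = muI x (L+2*j) := h2 _ (by omega)
        have e3 : muI x (2*j) = x j := muI_even x j
        have e4 : muI x (L+2*j) = x (m+j) := by
          have hrw : L + 2*j = 2*(m+j) := by omega
          rw [hrw, muI_even]
        have : x j = x (m+j) := by rw [← e3, ← e1, e2, e4]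
        rw [this]
        congr 1
        omega
    rw [List.get_eq_getElem, ← List.getD_eq_getElem _ false]
    exact key

lemma mu_length (w : List Bool) : (mu w).length = 2 * w.length := by
  induction w with
  | nil => simp [mu]
  | cons b w ih => simp [mu] at ih ⊢; omega


theorem stmt0 :
    (∀ (x z : List Bool), z ≠ [] → (z ++ z) <+: mu x →
      ∃ w, z = mu w ∧ (w ++ w) <+: x) ∧
    (∀ (x : ℕ → Bool) (z : List Bool), z ≠ [] → InfPrefix (z ++ z) (muI x) →
      ∃ w, z = mu w ∧ InfPrefix (w ++ w) x) := by
  constructor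
  · intro x z hz hpre
    set xh : ℕ → Bool := appendInf x (fun _ => false) with hxh
    have hxval : ∀ i, i < x.length → xh i = x.getD i false := by
      intro i hi
      simp [hxh, appendInf, hi, List.getD_eq_getElem _ _ hi]
    have hxeq : (List.range x.length).map xh = x := by
      apply List.ext_getElem
      · simp
      · intro i h1 h2
        have : i < x.length := by simpa using h1
        simp only [List.getElem_map, List.getElem_range]
        rw [hxval i this, List.getD_eq_getElem _ _ this]
    have hmux : mu x = (List.range (2 * x.length)).map (muI xh) := by
      rw [← mu_range, hxeq]
    have hlen : (z ++ z).length ≤ (mu x).length := hpre.length_le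
    have hzlen : z.length ≤ x.length := by
      rw [mu_length] at hlen; simp at hlen; omega
    have hip : InfPrefix (z ++ z) (muI xh) := by
      intro i hi
      have hi2 : i < (mu x).length := lt_of_lt_of_le hi hlen
      have e1 : (z ++ z).get ⟨i, hi⟩ = (mu x)[i] := by
        rw [List.get_eq_getElem]
        exact hpre.getElem hi
      rw [e1]
      simp [hmux]
    obtain ⟨w, hw1, hw2⟩ := infCase xh z hz hip
    refine ⟨w, hw1, ?_⟩
    have hzw : z.length = 2 * w.length := by rw [hw1, mu_length]
    have hwwlen : (w ++ w).length ≤ x.length := by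
      simp only [List.length_append]; omega
    have : w ++ w = x.take ((w ++ w).length) := by
      apply List.ext_getElem
      · simp; omega
      · intro i h1 h2
        have hi : i < (w ++ w).length := h1
        have hix : i < x.length := by omega
        rw [List.getElem_take]
        have := hw2 i hi
        rw [List.get_eq_getElem] at this
        rw [this, hxval i hix, List.getD_eq_getElem _ _ hix]
    rw [this]
    exact List.take_prefix _ _
  · intro x z hz hip
    exact infCase x z hz hip
end

section
/- Let x be a binary word and p a positive integer. If the longest p-periodic prefix of μ(x) has exponent β ≥ 2, then p is even and the longest (p/2)-periodic prefix of x also has exponent β. -/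
theorem stmt3 (x : ℕ → Bool) (p : ℕ) (hp : 0 < p) (β : ℚ) (hβ : 2 ≤ β) (n : ℕ)
    (hper : PrefPeriodic (muI x) p n) (hmax : ¬ PrefPeriodic (muI x) p (n + 1))
    (hexp : (n : ℚ) = β * p) :
    p % 2 = 0 ∧ ∃ m, PrefPeriodic x (p / 2) m ∧ ¬ PrefPeriodic x (p / 2) (m + 1) ∧
      (m : ℚ) = β * (p / 2 : ℕ) := by
  have hy_even : ∀ k, muI x (2*k) = x k := by
    intro k
    unfold muI
    rw [if_pos (by omega)]
    congr 1
    omega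
  have hy_odd : ∀ k, muI x (2*k+1) = !(x k) := by
    intro k
    unfold muI
    rw [if_neg (by omega)]
    have : (2*k+1)/2 = k := by omega
    rw [this]
  have hn2p : 2 * p ≤ n := by
    have h1 : (2:ℚ) * p ≤ β * p := mul_le_mul_of_nonneg_right hβ (by positivity)
    rw [← hexp] at h1
    exact_mod_cast h1
  have hpeven : p % 2 = 0 := by
    by_contra hodd
    set q := p / 2 with hq
    have hpq : p = 2*q + 1 := by omega
    have A : ∀ k, 2*k + p < n → x k = !(x (k+q)) := by
      intro k hk
      have h := hper (2*k) hk
      have e2 : 2*k + p = 2*(k+q) + 1 := by omega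
      rw [hy_even, e2, hy_odd] at h
      exact h
    have B : ∀ k, 2*k + 1 + p < n → x (k+q+1) = !(x k) := by
      intro k hk
      have h := hper (2*k+1) hk
      have e2 : 2*k + 1 + p = 2*(k+q+1) := by omega
      rw [hy_odd, e2, hy_even] at h
      exact h.symm
    have C : ∀ k, k < q → x (k+q+1) = x (k+q) := by
      intro k hk
      have ha := A k (by omega)
      have hb := B k (by omega)
      rw [hb, ha, Bool.not_not]
    have const : ∀ k, k ≤ q → x (q + k) = x q := by
      intro k
      induction k with
      | zero => simp
      | succ k ih =>
        intro hk
        have hC := C k (by omega)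
        have e : q + (k+1) = k + q + 1 := by omega
        have e2 : k + q = q + k := by omega
        rw [e, hC, e2, ih (by omega)]
    have hAq := A q (by omega)
    have hc := const q le_rfl
    rw [hc] at hAq
    simp at hAq
  refine ⟨hpeven, ?_⟩
  set q := p / 2 with hq
  have hpq : p = 2*q := by omega
  simp only [PrefPeriodic, not_forall] at hmax
  obtain ⟨i, hi, hne⟩ := hmax
  have hip : i + p = n := by
    by_contra h
    exact hne (hper i (by omega))
  have hneven : n % 2 = 0 := by
    by_contra hno
    obtain ⟨j, hj⟩ : ∃ j, i = 2*j+1 := ⟨i/2, by omega⟩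
    have h1 := hper (2*j) (by omega)
    have e1 : 2*j + p = 2*(j+q) := by omega
    rw [hy_even, e1, hy_even] at h1
    apply hne
    rw [hj]
    have e2 : 2*j + 1 + p = 2*(j+q)+1 := by omega
    rw [e2, hy_odd, hy_odd, h1]
  obtain ⟨j, hj⟩ : ∃ j, i = 2*j := ⟨i/2, by omega⟩
  refine ⟨n/2, ?_, ?_, ?_⟩
  · intro k hk
    have h := hper (2*k) (by omega)
    have e : 2*k + p = 2*(k+q) := by omega
    rw [hy_even, e, hy_even] at h
    exact h
  · intro hcon
    apply hne
    have hx := hcon j (by omega)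
    rw [hj]
    have e : 2*j + p = 2*(j+q) := by omega
    rw [e, hy_even, hy_even]
    exact hx
  · have hn' : (n:ℚ) = 2 * ((n/2 : ℕ):ℚ) := by
      have : n = 2 * (n/2) := by omega
      exact_mod_cast this
    have hp' : (p:ℚ) = 2 * ((q : ℕ):ℚ) := by
      have : p = 2 * q := hpq
      exact_mod_cast this
    have h := hexp
    rw [hn', hp'] at h
    have : ((n/2:ℕ):ℚ) = β * (q:ℚ) := by linarith
    exact this
end

section
/- For every right-infinite binary word x, the word 00μ(1μ(x)) is 7/3-power-free if and only if 0μ(1μ(x)) is 7/3-power-free. -/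
/-! Since `00μ(1μ(x)) = 0·(0μ(1μ(x)))`, a 7/3-power occurring in the longer word but not in the
shorter one is a prefix `w`, and dropping its first letter leaves a factor of `0μ(1μ(x))` with the
same period `p`; so `7p ≤ 3|w| < 7p + 3`. Such a prefix period is ruled out by the first letters
`0 0 1 0 z₁ z̄₁ …` of the word, where `z = 1μ(x)`: for even `p` the letters at positions `p, p + 1`
form a complementary pair `zᵣ z̄ᵣ` of `μ(z)` instead of `00`, and for odd `p ≥ 5` the period forces
three equal consecutive letters in `z`; `p = 1` and `p = 3` are checked directly. -/

theorem freeI_iff {x : ℕ → Bool} {β : ℚ} :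
    FreeI x β ↔ ∀ i p n, 1 ≤ p → PrefPeriodic (fun k => x (i + k)) p n → (n : ℚ) < β * p := by
  constructor
  · intro hfree i p n hp hper
    by_contra! hle
    refine hfree (List.ofFn fun k : Fin n => x (i + k)) ⟨i, by simp⟩ ⟨p, hp, ?_, by simpa⟩
    intro j hj
    simp only [List.length_ofFn] at hj
    simp [List.getD_eq_getElem?_getD, show j < n by omega, hj, hper j hj]
  · rintro h w ⟨i, hw⟩ ⟨p, hp, hper, hle⟩
    have hper' : PrefPeriodic (fun k => x (i + k)) p w.length := by
      intro j hj
      have := hper j hj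
      rw [List.getD_eq_getElem _ _ (by omega), List.getD_eq_getElem _ _ hj] at this
      have hj' := hw j (by omega)
      have hjp := hw (j + p) hj
      simp only [List.get_eq_getElem] at hj' hjp
      simp only [← hj', ← hjp, this]
    exact (h i p _ hp hper').not_ge hle

theorem PrefPeriodic.mono {x : ℕ → Bool} {p m n : ℕ} (h : PrefPeriodic x p n) (hmn : m ≤ n) :
    PrefPeriodic x p m :=
  fun i hi => h i (by omega)

theorem PrefPeriodic.eq {x : ℕ → Bool} {p n : ℕ} (h : PrefPeriodic x p n) {i j : ℕ}
    (hij : i + p = j) (hj : j < n) : x i = x j :=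
  hij ▸ h i (hij ▸ hj)

theorem PrefPeriodic.tail {x : ℕ → Bool} {p n : ℕ} (h : PrefPeriodic x p n) :
    PrefPeriodic (fun k => x (k + 1)) p (n - 1) :=
  fun i hi => by simpa only [add_right_comm i p] using h (i + 1) (by omega)

@[simp]
theorem appendInf_singleton_succ (a : Bool) (y : ℕ → Bool) (k : ℕ) :
    appendInf [a] y (k + 1) = y k := by
  simp [appendInf]

theorem appendInf_cons (a : Bool) (l : List Bool) (y : ℕ → Bool) :
    appendInf (a :: l) y = appendInf [a] (appendInf l y) := by
  funext n
  cases n with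
  | zero => rfl
  | succ n => simp [appendInf]

@[simp]
theorem appendInf_pair_add_two (a b : Bool) (y : ℕ → Bool) (k : ℕ) :
    appendInf [a, b] y (k + 2) = y k := by
  simp [appendInf]

@[simp]
theorem appendInf_pair_zero (a b : Bool) (y : ℕ → Bool) : appendInf [a, b] y 0 = a := rfl

@[simp]
theorem appendInf_pair_one (a b : Bool) (y : ℕ → Bool) : appendInf [a, b] y 1 = b := rfl

theorem freeI_appendInf_singleton_iff {a : Bool} {y : ℕ → Bool} {β : ℚ}
    (hpref : ∀ p n, 1 ≤ p → PrefPeriodic (appendInf [a] y) p n → β * p ≤ n → β * p + 1 ≤ n) :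
    FreeI (appendInf [a] y) β ↔ FreeI y β := by
  simp only [freeI_iff]
  constructor
  · intro h i p n hp hper
    exact h (i + 1) p n hp (by simpa [add_right_comm i 1] using hper)
  · intro h i p n hp hper
    cases i with
    | succ i => exact h i p n hp (by simpa [add_right_comm i 1] using hper)
    | zero =>
      by_contra! hle
      simp only [zero_add] at hper
      have hn := hpref p n hp hper hle
      have := h 0 p (n - 1) hp (by simpa using hper.tail)
      rw [Nat.cast_pred (by exact_mod_cast (show (0 : ℚ) < n by linarith))] at this
      linarith

@[simp]
theorem muI_two_mul (z : ℕ → Bool) (k : ℕ) : muI z (2 * k) = z k := by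
  simp [muI]

@[simp]
theorem muI_two_mul_add_one (z : ℕ → Bool) (k : ℕ) : muI z (2 * k + 1) = !z k := by
  simp [muI, Nat.add_mod, Nat.add_div]

theorem not_three_consecutive_eq {z : ℕ → Bool} (hz : ∀ k, z (2 * k + 2) = !z (2 * k + 1))
    (k : ℕ) : ¬ (z k = z (k + 1) ∧ z (k + 1) = z (k + 2)) := by
  rintro ⟨h₁, h₂⟩
  rcases Nat.even_or_odd' k with ⟨j, rfl | rfl⟩
  · simp [hz j] at h₂
  · simp [show 2 * j + 1 + 1 = 2 * j + 2 by ring, hz j] at h₁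

section PrefixPeriods

variable {z : ℕ → Bool}

theorem not_prefPeriodic_even (r : ℕ) :
    ¬ PrefPeriodic (appendInf [false, false] (muI z)) (2 * r + 2) (2 * r + 4) := by
  intro h
  have h₀ := h.eq (i := 0) (j := 2 * r + 2) (by ring) (by omega)
  have h₁ := h.eq (i := 1) (j := 2 * r + 1 + 2) (by ring) (by omega)
  simp only [appendInf_pair_zero, appendInf_pair_one, appendInf_pair_add_two, muI_two_mul,
    muI_two_mul_add_one] at h₀ h₁
  simp [← h₀] at h₁

theorem not_prefPeriodic_one (hz0 : z 0 = true) :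
    ¬ PrefPeriodic (appendInf [false, false] (muI z)) 1 3 := by
  intro h
  have := h.eq (i := 1) (j := 2) rfl (by omega)
  simp_all [muI]

theorem not_prefPeriodic_three (hz0 : z 0 = true) (hz : ∀ k, z (2 * k + 2) = !z (2 * k + 1)) :
    ¬ PrefPeriodic (appendInf [false, false] (muI z)) 3 7 := by
  intro h
  have h₁ := h.eq (i := 1) (j := 2 * 1 + 2) rfl (by omega)
  have h₃ := h.eq (i := 2 * 0 + 1 + 2) (j := 2 * 2 + 2) rfl (by omega)
  have := hz 0
  simp_all [muI]

theorem not_prefPeriodic_odd (hz0 : z 0 = true) (hz : ∀ k, z (2 * k + 2) = !z (2 * k + 1))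
    (h : ℕ) :
    ¬ PrefPeriodic (appendInf [false, false] (muI z)) (2 * h + 1) (2 * h + 7) := by
  intro hper
  have h₂ := hper.eq (i := 2 * 0 + 2) (j := 2 * h + 1 + 2) (by ring) (by omega)
  have h₃ := hper.eq (i := 2 * 0 + 1 + 2) (j := 2 * (h + 1) + 2) (by ring) (by omega)
  have h₄ := hper.eq (i := 2 * 1 + 2) (j := 2 * (h + 1) + 1 + 2) (by ring) (by omega)
  have h₅ := hper.eq (i := 2 * 1 + 1 + 2) (j := 2 * (h + 2) + 2) (by ring) (by omega)
  simp only [appendInf_pair_add_two, muI_two_mul, muI_two_mul_add_one, hz0] at h₂ h₃ h₄ h₅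
  simp [muI, hz0] at h₃
  simp only [h₃, Bool.not_false] at h₄
  simp only [h₄, Bool.not_true] at h₅
  exact not_three_consecutive_eq hz h ⟨by simpa [h₃] using h₂.symm, by simp [h₃, h₅]⟩

theorem seven_mul_add_three_le_of_prefPeriodic (hz0 : z 0 = true)
    (hz : ∀ k, z (2 * k + 2) = !z (2 * k + 1)) {p n : ℕ} (hp : 1 ≤ p)
    (hper : PrefPeriodic (appendInf [false, false] (muI z)) p n) (hpn : 7 * p ≤ 3 * n) :
    7 * p + 3 ≤ 3 * n := by
  by_contra! hnp
  rcases Nat.even_or_odd' p with ⟨k, hk | rfl⟩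
  · obtain ⟨r, rfl⟩ : ∃ r, p = 2 * r + 2 := ⟨k - 1, by omega⟩
    exact not_prefPeriodic_even r (hper.mono (by omega))
  · rcases k with _ | _ | h
    · exact not_prefPeriodic_one hz0 (hper.mono (by omega))
    · exact not_prefPeriodic_three hz0 hz (hper.mono (by omega))
    · exact not_prefPeriodic_odd hz0 hz (h + 2) (hper.mono (by omega))

end PrefixPeriods

theorem stmt11 (x : ℕ → Bool) :
    Free73 (appendInf [false, false] (muI (appendInf [true] (muI x)))) ↔
    Free73 (appendInf [false] (muI (appendInf [true] (muI x)))) := by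
  set z := appendInf [true] (muI x)
  have hz : ∀ k, z (2 * k + 2) = !z (2 * k + 1) := fun k => by
    simp [z, show 2 * k + 2 = 2 * k + 1 + 1 by ring]
  unfold Free73
  rw [appendInf_cons]
  refine freeI_appendInf_singleton_iff fun p n hp hper hle => ?_
  rw [← appendInf_cons] at hper
  have h := seven_mul_add_three_le_of_prefPeriodic rfl hz hp hper
    (by exact_mod_cast (by linarith : (7 * p : ℚ) ≤ 3 * n))
  have : (7 * p + 3 : ℚ) ≤ 3 * n := by exact_mod_cast h
  linarith
end
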